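/- Under the Dubrovin-equations setup, for every t ∈ I the following quadrature identities hold: Σ_{k=1}^{n} λ_k(t)^m · λ̇_k(t) / (2 w_k(t)) = 0 for every m = 1, …, n−1, and Σ_{k=1}^{n} λ̇_k(t) / (2 w_k(t)) = (−1)^n / ( λ_1(t) · λ_2(t) ⋯ λ_n(t) ). In particular, after the reparameterization dt = (λ_1 ⋯ λ_n / √(b_1 b_2 ⋯ b_{2n})) dσ, the sums √(∏_{i=1}^{2n} b_i) · Σ_k λ_k^{j−1} λ̇_k/(2 w_k) equal ±dσ/dt for j = 1 and vanish for j = 2, …, n. -/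
import Mathlib

open Finset

section Aux
open Polynomial

lemma basisDivisor_leadingCoeff {x y : ℝ} :
    (Lagrange.basisDivisor x y).leadingCoeff = (x - y)⁻¹ := by
  rw [Lagrange.basisDivisor, leadingCoeff_mul, leadingCoeff_C,
    (monic_X_sub_C y).leadingCoeff, mul_one]

lemma basis_coeff {ι : Type*} [DecidableEq ι] {s : Finset ι} {v : ι → ℝ}
    (hvs : Set.InjOn v s) {i : ι} (hi : i ∈ s) :
    (Lagrange.basis s v i).coeff (s.card - 1) = (∏ j ∈ s.erase i, (v i - v j))⁻¹ := by
  have hnd : (Lagrange.basis s v i).natDegree = s.card - 1 :=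
    natDegree_eq_of_degree_eq_some (Lagrange.degree_basis hvs hi)
  rw [← hnd, coeff_natDegree, Lagrange.basis, leadingCoeff_prod, ← prod_inv_distrib]
  exact prod_congr rfl fun j hj => basisDivisor_leadingCoeff

lemma lagrange_sum_pow {ι : Type*} [DecidableEq ι] {s : Finset ι} {v : ι → ℝ}
    (hvs : Set.InjOn v s) {m : ℕ} (hm : m + 1 < s.card) :
    ∑ i ∈ s, (v i) ^ m / ∏ j ∈ s.erase i, (v i - v j) = 0 := by
  have hdeg : (X ^ m : ℝ[X]).degree < s.card := by
    rw [degree_X_pow]; exact_mod_cast by omega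
  have key := Lagrange.eq_interpolate hvs hdeg
  have h2 := congrArg (fun f => Polynomial.coeff f (s.card - 1)) key
  simp only [Lagrange.interpolate_apply, finset_sum_coeff, coeff_C_mul, coeff_X_pow,
    eval_pow, eval_X] at h2
  rw [if_neg (by omega)] at h2
  have h3 : ∑ i ∈ s, v i ^ m / ∏ j ∈ s.erase i, (v i - v j)
      = ∑ x ∈ s, v x ^ m * (Lagrange.basis s v x).coeff (s.card - 1) :=
    sum_congr rfl fun i hi => by rw [basis_coeff hvs hi, div_eq_mul_inv]
  rw [h3, ← h2]

end Aux

lemma erase_zero_eq {n : ℕ} :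
    (univ : Finset (Fin (n + 1))).erase 0 = univ.image Fin.succ := by
  ext j
  simp [Fin.exists_succ_eq]

lemma erase_succ_eq {n : ℕ} (k : Fin n) :
    (univ : Finset (Fin (n + 1))).erase k.succ
      = insert 0 ((univ.erase k).image Fin.succ) := by
  ext j
  induction j using Fin.cases with
  | zero => simp [(Fin.succ_ne_zero k).symm]
  | succ m => simp [Fin.succ_ne_zero, Fin.succ_inj, eq_comm (a := m)]

lemma sum_inv_key {n : ℕ} (hn : 1 ≤ n) (x : Fin n → ℝ)
    (hx0 : ∀ k, x k ≠ 0) (hxd : ∀ k l, k ≠ l → x k ≠ x l) :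
    ∑ k, 1 / (x k * ∏ j ∈ univ.erase k, (x k - x j)) = (-1) ^ (n + 1) / ∏ k, x k := by
  set v : Fin (n + 1) → ℝ := Fin.cons 0 x with hv
  have hinj : Set.InjOn v (univ : Finset (Fin (n + 1))) := by
    intro a _ b _ h
    rcases Fin.eq_zero_or_eq_succ a with rfl | ⟨i, rfl⟩ <;>
      rcases Fin.eq_zero_or_eq_succ b with rfl | ⟨j, rfl⟩
    · rfl
    · simp only [v, Fin.cons_zero, Fin.cons_succ] at h; exact absurd h.symm (hx0 j)
    · simp only [v, Fin.cons_zero, Fin.cons_succ] at h; exact absurd h (hx0 i)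
    · simp only [v, Fin.cons_succ] at h
      by_contra hab
      exact hxd i j (fun e => hab (by rw [e])) h
  have h0 := lagrange_sum_pow (s := (univ : Finset (Fin (n + 1)))) hinj (m := 0)
    (by rw [card_univ, Fintype.card_fin]; omega)
  rw [Fin.sum_univ_succ] at h0
  have hA : ∏ j ∈ (univ : Finset (Fin (n + 1))).erase 0, (v 0 - v j)
      = (-1) ^ n * ∏ k, x k := by
    rw [erase_zero_eq, prod_image (fun a _ b _ h => Fin.succ_injective _ h)]
    simp only [v, Fin.cons_zero, Fin.cons_succ, zero_sub]
    have : ∀ k : Fin n, -x k = -1 * x k := fun k => by ring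
    simp_rw [this, prod_mul_distrib, prod_const, card_univ, Fintype.card_fin]
  have hB : ∀ k : Fin n, ∏ j ∈ (univ : Finset (Fin (n + 1))).erase k.succ, (v k.succ - v j)
      = x k * ∏ j ∈ univ.erase k, (x k - x j) := by
    intro k
    rw [erase_succ_eq, prod_insert (by simp [Fin.succ_ne_zero]),
      prod_image (fun a _ b _ h => Fin.succ_injective _ h)]
    simp [v]
  simp only [pow_zero, hA, hB] at h0
  have hP : (∏ k, x k) ≠ 0 := prod_ne_zero_iff.2 fun k _ => hx0 k
  have hS := eq_neg_of_add_eq_zero_right h0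
  have hsq : ((-1 : ℝ)) ^ n * ((-1 : ℝ)) ^ n = 1 := by
    rw [← pow_add]; exact Even.neg_one_pow ⟨n, rfl⟩
  have hinv : (((-1 : ℝ)) ^ n)⁻¹ = (-1) ^ n := inv_eq_of_mul_eq_one_left hsq
  rw [hS, one_div, mul_inv, hinv, pow_succ]
  ring

/-- Quadrature identities linearizing the billiard/geodesic flow via the Abel–Jacobi map:
for solutions of the Dubrovin equations on the hyperelliptic curve
`w² = −∏_{i=0}^{2n}(λ−bᵢ)` (`0 = b₀ < b₁ < ⋯ < b_{2n}`),
`Σₖ λₖ^m λ̇ₖ/(2wₖ) = 0` for `m = 1, …, n−1`, and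
`Σₖ λ̇ₖ/(2wₖ) = (−1)ⁿ/(λ₁⋯λₙ)`.  In particular, after the reparameterization
`dt = (λ₁⋯λₙ/√(b₁⋯b_{2n})) dσ`, the sums `√(∏bᵢ)·Σₖ λₖ^{j−1} λ̇ₖ/(2wₖ)` equal
`±dσ/dt` for `j = 1` and vanish for `j = 2, …, n`. -/
theorem dubrovin_quadratures (n : ℕ) (hn : 1 ≤ n)
    (b : Fin (2 * n + 1) → ℝ) (hb0 : b 0 = 0) (hb : StrictMono b)
    (p q : ℝ) (lam lamdot : Fin n → ℝ → ℝ) (w : Fin n → ℝ → ℝ)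
    (hlam_deriv : ∀ t ∈ Set.Ioo p q, ∀ k : Fin n, HasDerivAt (lam k) (lamdot k t) t)
    (hlam_ne_zero : ∀ t ∈ Set.Ioo p q, ∀ k : Fin n, lam k t ≠ 0)
    (hlam_distinct : ∀ t ∈ Set.Ioo p q, ∀ k l : Fin n, k ≠ l → lam k t ≠ lam l t)
    (hw_ne : ∀ t ∈ Set.Ioo p q, ∀ k : Fin n, w k t ≠ 0)
    (hw : ∀ t ∈ Set.Ioo p q, ∀ k : Fin n, (w k t) ^ 2 = -∏ i, (lam k t - b i))
    (hdubrovin : ∀ t ∈ Set.Ioo p q, ∀ k : Fin n,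
      lamdot k t = -2 * w k t / (lam k t * ∏ j ∈ univ.erase k, (lam k t - lam j t))) :
    ∀ t ∈ Set.Ioo p q,
      (∀ m : ℕ, 1 ≤ m → m ≤ n - 1 →
        ∑ k, (lam k t) ^ m * lamdot k t / (2 * w k t) = 0) ∧
      (∑ k, lamdot k t / (2 * w k t) = (-1) ^ n / ∏ k, lam k t) ∧
      (∀ j : ℕ, 2 ≤ j → j ≤ n →
        Real.sqrt (∏ i ∈ univ.erase 0, b i) *
          ∑ k, (lam k t) ^ (j - 1) * lamdot k t / (2 * w k t) = 0) ∧
      (Real.sqrt (∏ i ∈ univ.erase 0, b i) * ∑ k, lamdot k t / (2 * w k t) =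
          Real.sqrt (∏ i ∈ univ.erase 0, b i) / ∏ k, lam k t ∨
       Real.sqrt (∏ i ∈ univ.erase 0, b i) * ∑ k, lamdot k t / (2 * w k t) =
          -(Real.sqrt (∏ i ∈ univ.erase 0, b i) / ∏ k, lam k t)) := by
  intro t ht
  have hx0 : ∀ k, lam k t ≠ 0 := hlam_ne_zero t ht
  have hxd : ∀ k l : Fin n, k ≠ l → lam k t ≠ lam l t := hlam_distinct t ht
  have hwn : ∀ k, w k t ≠ 0 := hw_ne t ht
  have hD : ∀ k : Fin n, (∏ j ∈ univ.erase k, (lam k t - lam j t)) ≠ 0 := fun k =>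
    prod_ne_zero_iff.2 fun j hj => sub_ne_zero.2 (hxd k j (ne_of_mem_erase hj).symm)
  have hterm : ∀ k : Fin n, lamdot k t / (2 * w k t)
      = -(1 / (lam k t * ∏ j ∈ univ.erase k, (lam k t - lam j t))) := by
    intro k
    rw [hdubrovin t ht k, div_div,
      show (-2 : ℝ) * w k t = -1 * (2 * w k t) from by ring,
      mul_div_mul_right _ _ (mul_ne_zero two_ne_zero (hwn k)), neg_div, one_div]
  have hil : Set.InjOn (fun k => lam k t) (univ : Finset (Fin n)) := by
    intro a _ b _ h
    by_contra hab
    exact hxd a b hab h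
  have part1 : ∀ m : ℕ, 1 ≤ m → m ≤ n - 1 →
      ∑ k, (lam k t) ^ m * lamdot k t / (2 * w k t) = 0 := by
    intro m hm1 hm2
    have h := lagrange_sum_pow hil (m := m - 1)
      (by rw [card_univ, Fintype.card_fin]; omega)
    calc ∑ k, (lam k t) ^ m * lamdot k t / (2 * w k t)
        = ∑ k, -(lam k t ^ (m - 1) / ∏ j ∈ univ.erase k, (lam k t - lam j t)) := by
          refine sum_congr rfl fun k _ => ?_
          rw [mul_div_assoc, hterm k]
          have hpow : lam k t ^ m = lam k t ^ (m - 1) * lam k t := by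
            rw [← pow_succ]; congr 1; omega
          rw [hpow]
          field_simp [hx0 k, hD k]
      _ = 0 := by rw [sum_neg_distrib, h, neg_zero]
  have key := sum_inv_key hn (fun k => lam k t) hx0 hxd
  have part2 : ∑ k, lamdot k t / (2 * w k t) = (-1) ^ n / ∏ k, lam k t := by
    calc ∑ k, lamdot k t / (2 * w k t)
        = -∑ k, 1 / (lam k t * ∏ j ∈ univ.erase k, (lam k t - lam j t)) := by
          rw [← sum_neg_distrib]; exact sum_congr rfl fun k _ => hterm k
      _ = -((-1) ^ (n + 1) / ∏ k, lam k t) := by rw [key]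
      _ = (-1) ^ n / ∏ k, lam k t := by rw [pow_succ]; ring
  refine ⟨part1, part2, ?_, ?_⟩
  · intro j hj2 hjn
    rw [part1 (j - 1) (by omega) (by omega), mul_zero]
  · rw [part2]
    rcases Nat.even_or_odd n with he | ho
    · left; rw [he.neg_one_pow]; ring
    · right; rw [ho.neg_one_pow]; ring
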